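/- The down-up Markov chain on 𝒯_n satisfies K_n = (1/C(n,2)) · A G P A^{-1}, where A is the diagonal operator on ℂ𝒯_n sending t to m(t)·t; equivalently, for all t, t' ∈ 𝒯_n, K(t,t') = (m(t') / (C(n,2) m(t))) · Σ_{s: s ↗ t and s ↗ t'} m(s,t) n(s,t'). -/

import Mathlib

/-!
Common definitions: rooted unlabeled trees on `n` vertices, the growth/pruning
coefficients `n(t,t')` and `m(t,t')`, the measure `π_n`, the up/down transition
probabilities, the down-up and up-down Markov chains, and separation distance.

A rooted tree is represented as `PreTree.node cs` where `cs` is the list of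
subtrees of the root's children.  An *unlabeled* rooted tree is represented by
its canonical representative (children recursively sorted by an injective
encoding into `ℕ`), and `trees n` is the finite set of canonical rooted trees
on `n` vertices.
-/

namespace RootedTreeChain

inductive PreTree : Type where
  | node : List PreTree → PreTree

namespace PreTree

/- Number of vertices. -/
mutual
  def size : PreTree → ℕ
    | .node cs => 1 + sizeList cs
  def sizeList : List PreTree → ℕ
    | [] => 0
    | t :: ts => size t + sizeList ts
end

mutual
def deq : (a b : PreTree) → Decidable (a = b)
  | .node cs, .node ds =>
    match deqList cs ds with
    | isTrue h => isTrue (by rw [h])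
    | isFalse h => isFalse (by intro hh; cases hh; exact h rfl)
def deqList : (as bs : List PreTree) → Decidable (as = bs)
  | [], [] => isTrue rfl
  | [], _ :: _ => isFalse (by simp)
  | _ :: _, [] => isFalse (by simp)
  | a :: as, b :: bs =>
    match deq a b, deqList as bs with
    | isTrue h1, isTrue h2 => isTrue (by rw [h1, h2])
    | isFalse h1, _ => isFalse (by intro hh; injection hh; contradiction)
    | _, isFalse h2 => isFalse (by intro hh; injection hh; contradiction)
end

instance : DecidableEq PreTree := deq

/- An injective encoding of trees into `ℕ`, used only to sort children
so that each unlabeled rooted tree has a unique canonical representative. -/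
mutual
  def enc : PreTree → ℕ
    | .node cs => encList cs
  def encList : List PreTree → ℕ
    | [] => 0
    | t :: ts => Nat.pair (enc t) (encList ts) + 1
end

/- Canonical representative of the isomorphism class of a rooted tree:
recursively sort the children by their encoding. -/
mutual
  def canon : PreTree → PreTree
    | .node cs => .node ((canonList cs).mergeSort (fun a b => enc a ≤ enc b))
  def canonList : List PreTree → List PreTree
    | [] => []
    | t :: ts => canon t :: canonList ts
end

/-- The one-vertex rooted tree `•`. -/
def leaf : PreTree := .node []

/- The addresses (paths of child indices from the root) of all vertices. -/
mutual
  def positions : PreTree → List (List ℕ)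
    | .node cs => [] :: positionsList 0 cs
  def positionsList : ℕ → List PreTree → List (List ℕ)
    | _, [] => []
    | i, t :: ts => (positions t).map (fun p => i :: p) ++ positionsList (i + 1) ts
end

/- The addresses of all terminal vertices (vertices with no outgoing edge). -/
mutual
  def termPositions : PreTree → List (List ℕ)
    | .node [] => [[]]
    | .node (c :: cs) => termPositionsList 0 (c :: cs)
  def termPositionsList : ℕ → List PreTree → List (List ℕ)
    | _, [] => []
    | i, t :: ts => (termPositions t).map (fun p => i :: p) ++ termPositionsList (i + 1) ts
end

/- Attach a new terminal vertex by an edge to the vertex at address `p`. -/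
mutual
  def addLeafAt : PreTree → List ℕ → PreTree
    | .node cs, [] => .node (cs ++ [leaf])
    | .node cs, i :: p => .node (addLeafAtList cs i p)
  def addLeafAtList : List PreTree → ℕ → List ℕ → List PreTree
    | [], _, _ => []
    | t :: ts, 0, p => addLeafAt t p :: ts
    | t :: ts, i + 1, p => t :: addLeafAtList ts i p
end

/- Remove the (terminal) vertex at address `p` together with the edge into it. -/
mutual
  def removeAt : PreTree → List ℕ → PreTree
    | .node cs, [] => .node cs
    | .node cs, [i] => .node (cs.eraseIdx i)
    | .node cs, i :: p => .node (removeAtList cs i p)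
  def removeAtList : List PreTree → ℕ → List ℕ → List PreTree
    | [], _, _ => []
    | t :: ts, 0, p => removeAt t p :: ts
    | t :: ts, i + 1, p => t :: removeAtList ts i p
end

/-- For `s ↗ t` (and more generally any `s, t` with `size t = size s + 1`),
`ncoef s t` is `n(s,t)`: the number of vertices of `s` to which a new edge can
be added to obtain `t`. -/
def ncoef (s t : PreTree) : ℕ :=
  ((positions s).filter (fun p => canon (addLeafAt s p) = t)).length

/-- For `s ↗ t`, `mcoef s t` is `m(s,t)`: the number of edges of `t` (into a
terminal vertex) which when removed give `s`. -/
def mcoef (s t : PreTree) : ℕ :=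
  ((termPositions t).filter (fun p => canon (removeAt t p) = s)).length

/-- The list of all (canonical representatives of) rooted unlabeled trees on
`n` vertices: every tree on `n+1 ≥ 2` vertices is obtained by attaching a new
terminal vertex to a tree on `n` vertices. -/
def treeList : ℕ → List PreTree
  | 0 => []
  | 1 => [leaf]
  | n + 2 =>
      ((treeList (n + 1)).flatMap
        (fun t => (positions t).map (fun p => canon (addLeafAt t p)))).dedup

/-- The set `𝒯_n` of rooted unlabeled trees on `n` vertices. -/
def trees (n : ℕ) : Finset PreTree := (treeList n).toFinset

/-- `T_n = |𝒯_n|`, the number of rooted unlabeled trees on `n` vertices. -/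
def T (n : ℕ) : ℕ := (trees n).card

/-- Generalized growth coefficients: `nGen k t t'` is the coefficient `n(t,t')`
of `t'` in `G^k(t)` (for `size t' = size t + k`). -/
def nGen : ℕ → PreTree → PreTree → ℕ
  | 0, t, t' => if t = t' then 1 else 0
  | k + 1, t, t' => ((treeList (t.size + k)).map (fun s => nGen k t s * ncoef s t')).sum

/-- Generalized pruning coefficients: `mGen k t t'` is the coefficient `m(t,t')`
of `t` in `P^k(t')` (for `size t' = size t + k`). -/
def mGen : ℕ → PreTree → PreTree → ℕ
  | 0, t, t' => if t = t' then 1 else 0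
  | k + 1, t, t' => ((treeList (t'.size - 1)).map (fun s => mcoef s t' * mGen k t s)).sum

/-- `m(t) = m(•,t)`, the number of ways to take `t` apart by sequentially
removing terminal edges. -/
def mWt (t : PreTree) : ℕ := mGen (t.size - 1) leaf t

/-- `n(t) = n(•,t)`, the number of ways to build `t` up from `•`. -/
def nWt (t : PreTree) : ℕ := nGen (t.size - 1) leaf t

/-- The measure `π_n(t) = m(t) n(t) / ∏_{i=2}^n C(i,2)` on `𝒯_n`. -/
def piM (n : ℕ) (t : PreTree) : ℚ :=
  (mWt t * nWt t : ℚ) / ∏ i ∈ Finset.Icc 2 n, (Nat.choose i 2 : ℚ)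

/-- Upward transition probability `P_u(s,t) = m(s,t) n(t) / (C(n,2) n(s))`
from `s ∈ 𝒯_{n-1}` to `t ∈ 𝒯_n`. -/
def Pu (n : ℕ) (s t : PreTree) : ℚ :=
  (mcoef s t : ℚ) * (nWt t : ℚ) / ((Nat.choose n 2 : ℚ) * (nWt s : ℚ))

/-- Downward transition probability `P_d(t,s) = m(s,t) m(s) / m(t)`
from `t ∈ 𝒯_n` to `s ∈ 𝒯_{n-1}`. -/
def Pd (t s : PreTree) : ℚ :=
  (mcoef s t : ℚ) * (mWt s : ℚ) / (mWt t : ℚ)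

/-- The down-up Markov chain on `𝒯_n`:
`K(t,t') = Σ_{s : s ↗ t, s ↗ t'} P_d(t,s) P_u(s,t')`.  (The sum may be taken
over all `s ∈ 𝒯_{n-1}` since the summand vanishes unless `s ↗ t` and `s ↗ t'`.) -/
def K (n : ℕ) (t t' : PreTree) : ℚ :=
  ∑ s ∈ trees (n - 1), Pd t s * Pu n s t'

/-- `r`-step transition probabilities `K^r(t,t')` of the down-up chain. -/
def Kpow (n : ℕ) : ℕ → PreTree → PreTree → ℚ
  | 0, t, t' => if t = t' then 1 else 0
  | r + 1, t, t' => ∑ s ∈ trees n, K n t s * Kpow n r s t'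

/-- The up-down Markov chain on `𝒯_n`:
`DU_n(t,t') = Σ_{s : s ⋗ t, s ⋗ t'} P_u(t,s) P_d(s,t')`. -/
def DU (n : ℕ) (t t' : PreTree) : ℚ :=
  ∑ s ∈ trees (n + 1), Pu (n + 1) t s * Pd s t'

/-- `r`-step transition probabilities of the up-down chain. -/
def DUpow (n : ℕ) : ℕ → PreTree → PreTree → ℚ
  | 0, t, t' => if t = t' then 1 else 0
  | r + 1, t, t' => ∑ s ∈ trees n, DU n t s * DUpow n r s t'

/-- Maximal separation distance `s^*(r) = max_{t,t' ∈ 𝒯_n} [1 - K^r(t,t')/π_n(t')]`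
of the down-up chain on `𝒯_n`. -/
noncomputable def sStar (n r : ℕ) : ℝ :=
  sSup {x : ℝ | ∃ t ∈ trees n, ∃ t' ∈ trees n,
    x = 1 - (Kpow n r t t' : ℝ) / (piM n t' : ℝ)}

/-- Maximal separation distance of the up-down chain on `𝒯_n`. -/
noncomputable def sStarDU (n r : ℕ) : ℝ :=
  sSup {x : ℝ | ∃ t ∈ trees n, ∃ t' ∈ trees n,
    x = 1 - (DUpow n r t t' : ℝ) / (piM n t' : ℝ)}

/-- The path on `n` vertices (rooted at an end): the unique rooted tree on
`n ≥ 2` vertices with exactly one terminal vertex. -/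
def pathTree : ℕ → PreTree
  | 0 => leaf
  | 1 => leaf
  | n + 2 => .node [pathTree (n + 1)]

/-- The star on `n` vertices (rooted at the center): the unique rooted tree on
`n` vertices with `n-1` terminal vertices. -/
def starTree (n : ℕ) : PreTree := .node (List.replicate (n - 1) leaf)

/- The order of the symmetry group `SG(t) = ∏_{v ∈ t} SG(t,v)`, where for a
vertex `v` with children `v_1, …, v_k`, `SG(t,v)` is generated by the
permutations exchanging isomorphic subtrees rooted at the `v_i`. -/
mutual
  def sgOrder : PreTree → ℕ
    | .node cs => sgOrderList cs *
        ((canonList cs).dedup.map (fun c => Nat.factorial ((canonList cs).count c))).prod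
  def sgOrderList : List PreTree → ℕ
    | [] => 1
    | t :: ts => sgOrder t * sgOrderList ts
end

/- `hProd t = ∏_{v ∈ t} h(v)`, the product over all vertices `v` of `t` of the
number `h(v)` of vertices of the subtree rooted at `v`. -/
mutual
  def hProd : PreTree → ℕ
    | .node cs => size (.node cs) * hProdList cs
  def hProdList : List PreTree → ℕ
    | [] => 1
    | t :: ts => hProd t * hProdList ts
end

/-- The matrix entry of `G P : ℂ𝒯_n → ℂ𝒯_n`: the coefficient of `t'` in `G(P(t))`. -/
def gpEntry (n : ℕ) (t t' : PreTree) : ℕ :=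
  ∑ s ∈ trees (n - 1), mcoef s t * ncoef s t'

/-- The matrix entry of `(G P)^l : ℂ𝒯_n → ℂ𝒯_n`: the coefficient of `t'` in `(GP)^l(t)`. -/
def gpPow (n : ℕ) : ℕ → PreTree → PreTree → ℕ
  | 0, t, t' => if t = t' then 1 else 0
  | l + 1, t, t' => ∑ u ∈ trees n, gpPow n l t u * gpEntry n u t'

end PreTree

/-!
Write `SG(t)` for the symmetry group of `t`, of order `sgOrder t`. The heart of the matter is the
local identity `m(s,t) · |SG(s)| = n(s,t) · |SG(t)|` for `s ↗ t`. It is proved by induction on `t`,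
expanding both coefficients over the children of the root: the leaf that distinguishes `t` from `s`
is either a child of the root of `t`, or it sits inside a child `d` of `t` whose pruning is a child
`c` of `s`; in the second case, exchanging the child `c` for `d` changes `|SG|` by exactly the
factor that relates `m(c,d)` to `n(c,d)`. Summing the local identity along growth sequences gives
`m(t) = n(t) · |SG(t)|`, hence `m(s,t') m(s) n(t') = n(s,t') n(s) m(t')`, and this turns each
summand `P_d(t,s) P_u(s,t')` of `K(t,t')` into `m(t') m(s,t) n(s,t') / (C(n,2) m(t))`.
-/

end RootedTreeChain

theorem List.coe_eraseIdx_add_singleton {α : Type*} (l : List α) {j : ℕ} (hj : j < l.length) :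
    ((l.eraseIdx j : List α) : Multiset α) + {l[j]} = l := by
  rw [add_comm, Multiset.singleton_add, Multiset.cons_coe,
    Multiset.coe_eq_coe.mpr (l.getElem_cons_eraseIdx_perm hj)]

theorem List.coe_set_add_singleton {α : Type*} (l : List α) {j : ℕ} (hj : j < l.length) (x : α) :
    ((l.set j x : List α) : Multiset α) + {l[j]} = l + {x} := by
  rw [Multiset.coe_eq_coe.mpr (l.set_perm_cons_eraseIdx hj x), ← Multiset.cons_coe,
    ← l.coe_eraseIdx_add_singleton hj, ← Multiset.singleton_add]
  abel

theorem List.countP_eq_sum_ite {α β : Type*} [DecidableEq β] (l : List α) (g : α → β)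
    (Q : β → Prop) [DecidablePred Q] {S : Finset β} (hS : ∀ a ∈ l, Q (g a) → g a ∈ S) :
    l.countP (fun a => Q (g a)) = ∑ b ∈ S, if Q b then l.countP (fun a => g a = b) else 0 := by
  induction l with
  | nil => simp
  | cons a l ih =>
    have hsplit : ∀ b, (if Q b then l.countP (fun a => g a = b) + (if g a = b then 1 else 0)
        else 0) = (if Q b then l.countP (fun a => g a = b) else 0) +
          if g a = b then (if Q (g a) then 1 else 0) else 0 := by
      intro b
      by_cases h : g a = b <;> by_cases hb : Q b <;> simp [h, hb]
    simp only [List.countP_cons, decide_eq_true_eq, hsplit, Finset.sum_add_distrib,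
      Finset.sum_ite_eq, ih fun x hx => hS x (List.mem_cons_of_mem a hx)]
    by_cases hQ : Q (g a) <;> simp [hQ, hS a List.mem_cons_self]

theorem List.sum_map_eq_sum_count_smul {α M : Type*} [DecidableEq α] [AddCommMonoid M]
    (l : List α) (f : α → M) {S : Finset α} (hS : ∀ a ∈ l, a ∈ S) :
    (l.map f).sum = ∑ a ∈ S, (l : Multiset α).count a • f a := by
  simp only [Finset.sum_list_map_count, Multiset.coe_count]
  refine Finset.sum_subset (fun a ha => hS a (List.mem_toFinset.mp ha)) fun a _ ha => ?_
  rw [List.count_eq_zero_of_not_mem (mt List.mem_toFinset.mpr ha), zero_nsmul]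

theorem Multiset.mem_or_eq_of_add_singleton_eq {α : Type*} {A B : Multiset α} {x y : α}
    (h : A + {x} = B + {y}) : x ∈ B ∨ x = y := by
  have hx : x ∈ B + {y} := by
    rw [← h]
    exact Multiset.mem_add.mpr (.inr (Multiset.mem_singleton_self x))
  simpa using hx

theorem Multiset.prod_factorial_count_cons {α : Type*} [DecidableEq α] (M : Multiset α) (a : α) :
    ∏ x ∈ (a ::ₘ M).toFinset, ((a ::ₘ M).count x).factorial =
      (∏ x ∈ M.toFinset, (M.count x).factorial) * (M.count a + 1) := by
  have ha : a ∈ (a ::ₘ M).toFinset := by simp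
  have hsub : M.toFinset ⊆ (a ::ₘ M).toFinset := by simp [Finset.subset_insert]
  rw [Finset.prod_subset hsub fun x _ hx => by
      rw [Multiset.count_eq_zero.mpr (by simpa using hx), Nat.factorial_zero],
    ← Finset.mul_prod_erase _ _ ha, ← Finset.mul_prod_erase _ (fun x => (M.count x).factorial) ha,
    Multiset.count_cons_self, Nat.factorial_succ, Finset.prod_congr rfl fun x hx => by
      rw [Multiset.count_cons_of_ne (Finset.ne_of_mem_erase hx)]]
  ring

namespace RootedTreeChain
namespace PreTree

theorem size_node (cs : List PreTree) : size (.node cs) = 1 + (cs.map size).sum := by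
  suffices ∀ l, sizeList l = (l.map size).sum by rw [size, this]
  intro l
  induction l with
  | nil => rfl
  | cons t ts ih => rw [sizeList, ih, List.map_cons, List.sum_cons]

theorem size_lt_size_node {c : PreTree} {cs : List PreTree} (h : c ∈ cs) :
    size c < size (.node cs) := by
  have := List.le_sum_of_mem (List.mem_map_of_mem (f := size) h)
  rw [size_node]
  omega

@[elab_as_elim]
theorem induction {P : PreTree → Prop}
    (node : ∀ cs : List PreTree, (∀ c ∈ cs, P c) → P (.node cs)) : ∀ t, P t
  | .node cs => node cs fun c _ => induction node c
termination_by t => size t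
decreasing_by exact size_lt_size_node ‹_›

theorem enc_injective : Function.Injective enc := by
  intro a
  induction a using PreTree.induction with
  | node cs ih =>
    rintro ⟨ds⟩ h
    rw [enc, enc] at h
    congr 1
    induction cs generalizing ds with
    | nil => cases ds <;> simp_all [encList]
    | cons c cs ihc =>
      cases ds with
      | nil => simp [encList] at h
      | cons d ds =>
        rw [encList, encList, Nat.add_right_cancel_iff, Nat.pair_eq_pair] at h
        rw [ih c (by simp) h.1, ihc (fun x hx => ih x (by simp [hx])) ds h.2]

theorem pairwise_mergeSort_enc (l : List PreTree) :
    (l.mergeSort fun a b => enc a ≤ enc b).Pairwise fun a b => enc a ≤ enc b := by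
  simpa using List.pairwise_mergeSort (le := fun a b : PreTree => decide (enc a ≤ enc b))
    (fun a b c hab hbc => by simp only [decide_eq_true_eq] at *; omega)
    (fun a b => by simp [Nat.le_total]) l

theorem mergeSort_enc_eq_iff {l l' : List PreTree} (hl' : l'.Pairwise fun a b => enc a ≤ enc b) :
    l.mergeSort (fun a b => enc a ≤ enc b) = l' ↔ l.Perm l' := by
  refine ⟨fun h => h ▸ (List.mergeSort_perm l _).symm, fun h => ?_⟩
  refine List.Perm.eq_of_pairwise (le := fun a b => enc a ≤ enc b)
    (fun a b _ _ hab hba => enc_injective (le_antisymm hab hba))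
    (pairwise_mergeSort_enc l) hl' ((List.mergeSort_perm l _).trans h)

theorem canonList_eq_map (l : List PreTree) : canonList l = l.map canon := by
  induction l with
  | nil => rfl
  | cons t ts ih => rw [canonList, ih, List.map_cons]

theorem canon_node (cs : List PreTree) :
    canon (.node cs) = .node ((cs.map canon).mergeSort fun a b => enc a ≤ enc b) := by
  rw [canon, canonList_eq_map]

theorem size_canon (t : PreTree) : size (canon t) = size t := by
  induction t using PreTree.induction with
  | node cs ih =>
    rw [canon_node, size_node, size_node, ((List.mergeSort_perm _ _).map size).sum_eq,
      List.map_map]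
    exact congrArg _ (congrArg _ (List.map_congr_left ih))

def IsCanon (t : PreTree) : Prop := canon t = t

theorem isCanon_canon (t : PreTree) : IsCanon (canon t) := by
  induction t using PreTree.induction with
  | node cs ih =>
    have hfix : ∀ x ∈ (cs.map canon).mergeSort (fun a b => enc a ≤ enc b), canon x = x := by
      intro x hx
      obtain ⟨c, hc, rfl⟩ := List.mem_map.mp ((List.mergeSort_perm _ _).mem_iff.mp hx)
      exact ih c hc
    rw [IsCanon, canon_node, canon_node, List.map_congr_left hfix, List.map_id',
      List.mergeSort_of_pairwise (by simpa using pairwise_mergeSort_enc _)]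

theorem isCanon_leaf : IsCanon leaf := by
  simp [IsCanon, leaf, canon_node]

theorem IsCanon.pairwise {cs : List PreTree} (h : IsCanon (.node cs)) :
    cs.Pairwise fun a b => enc a ≤ enc b := by
  rw [IsCanon, canon_node, node.injEq] at h
  exact h ▸ pairwise_mergeSort_enc _

theorem IsCanon.of_mem {c : PreTree} {cs : List PreTree} (h : IsCanon (.node cs)) (hc : c ∈ cs) :
    IsCanon c := by
  rw [IsCanon, canon_node, node.injEq] at h
  rw [← h] at hc
  obtain ⟨c', -, rfl⟩ := List.mem_map.mp ((List.mergeSort_perm _ _).mem_iff.mp hc)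
  exact isCanon_canon c'

theorem map_canon_eq_self {cs : List PreTree} (h : ∀ c ∈ cs, IsCanon c) : cs.map canon = cs :=
  (List.map_congr_left h).trans (List.map_id' cs)

theorem canon_node_eq_iff {l ds : List PreTree} (h : IsCanon (.node ds)) :
    canon (.node l) = .node ds ↔ ((l.map canon : List PreTree) : Multiset PreTree) = ds := by
  rw [canon_node, node.injEq, mergeSort_enc_eq_iff h.pairwise, Multiset.coe_eq_coe]

theorem mem_positionsList {q : List ℕ} : ∀ {l : List PreTree} {i : ℕ},
    q ∈ positionsList i l → ∃ j, ∃ hj : j < l.length, ∃ p ∈ positions l[j], q = (i + j) :: p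
  | [], _, h => by simp [positionsList] at h
  | t :: ts, i, h => by
    rw [positionsList, List.mem_append, List.mem_map] at h
    rcases h with ⟨p, hp, rfl⟩ | h
    · exact ⟨0, by simp, p, hp, rfl⟩
    · obtain ⟨j, hj, p, hp, rfl⟩ := mem_positionsList h
      exact ⟨j + 1, by simpa using hj, p, hp, by rw [Nat.add_right_comm, Nat.add_assoc]⟩

theorem addLeafAtList_eq_set : ∀ {l : List PreTree} {j : ℕ} (hj : j < l.length) (p : List ℕ),
    addLeafAtList l j p = l.set j (addLeafAt l[j] p)
  | t :: ts, 0, _, p => rfl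
  | t :: ts, j + 1, hj, p => by
    rw [addLeafAtList, addLeafAtList_eq_set (by simpa using hj)]
    rfl

theorem removeAtList_eq_set : ∀ {l : List PreTree} {j : ℕ} (hj : j < l.length) (p : List ℕ),
    removeAtList l j p = l.set j (removeAt l[j] p)
  | t :: ts, 0, _, p => rfl
  | t :: ts, j + 1, hj, p => by
    rw [removeAtList, removeAtList_eq_set (by simpa using hj)]
    rfl

theorem removeAt_cons_cons (cs : List PreTree) (i a : ℕ) (p : List ℕ) :
    removeAt (.node cs) (i :: a :: p) = .node (removeAtList cs i (a :: p)) := by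
  rw [removeAt]
  exact fun h => List.cons_ne_nil a p h

theorem size_node_set {l : List PreTree} {j : ℕ} (hj : j < l.length) (x : PreTree) :
    size (.node (l.set j x)) + size l[j] = size (.node l) + size x := by
  have := congrArg (fun M : Multiset PreTree => (M.map size).sum) (l.coe_set_add_singleton hj x)
  simp only [Multiset.map_add, Multiset.sum_add, Multiset.map_coe, Multiset.sum_coe,
    Multiset.map_singleton, Multiset.sum_singleton] at this
  rw [size_node, size_node]
  omega

theorem size_addLeafAt {t : PreTree} {p : List ℕ} (hp : p ∈ positions t) :
    size (addLeafAt t p) = size t + 1 := by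
  induction t using PreTree.induction generalizing p with
  | node cs ih =>
    rw [positions, List.mem_cons] at hp
    rcases hp with rfl | hp
    · simp [addLeafAt, size_node, leaf]
      omega
    · obtain ⟨j, hj, p', hp', rfl⟩ := mem_positionsList hp
      have := size_node_set hj (addLeafAt cs[j] p')
      rw [ih _ (List.getElem_mem hj) hp'] at this
      rw [addLeafAt, Nat.zero_add, addLeafAtList_eq_set hj]
      omega

theorem ncoef_leaf_right (s : PreTree) : ncoef s leaf = 0 := by
  rw [ncoef, List.length_eq_zero_iff, List.filter_eq_nil_iff]
  intro p hp h
  have := congrArg size (of_decide_eq_true h)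
  rw [size_canon, size_addLeafAt hp] at this
  cases s
  simp [size_node, leaf] at this

theorem nil_notMem_termPositionsList : ∀ {l : List PreTree} {i : ℕ}, [] ∉ termPositionsList i l
  | [], _ => by simp [termPositionsList]
  | t :: ts, i => by simp [termPositionsList, nil_notMem_termPositionsList]

theorem eq_leaf_of_nil_mem_termPositions {t : PreTree} (h : [] ∈ termPositions t) : t = leaf := by
  obtain ⟨_ | ⟨c, cs⟩⟩ := t
  · rfl
  · exact absurd h nil_notMem_termPositionsList

theorem countP_positionsList {P : List ℕ → Bool} {G : PreTree → ℕ} : ∀ {l : List PreTree} {i : ℕ},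
    (∀ j (hj : j < l.length), (positions l[j]).countP (fun p => P ((i + j) :: p)) = G l[j]) →
      (positionsList i l).countP P = (l.map G).sum
  | [], _, _ => by simp [positionsList]
  | t :: ts, i, h => by
    rw [positionsList, List.countP_append, List.countP_map, List.map_cons, List.sum_cons,
      countP_positionsList (G := G) fun j hj => by
        rw [Nat.add_right_comm, Nat.add_assoc, ← List.getElem_cons_succ t]
        exact h (j + 1) (by simpa using hj)]
    exact congrArg (· + _) (h 0 (by simp))

theorem countP_termPositionsList {P : List ℕ → Bool} {G : PreTree → ℕ} :
    ∀ {l : List PreTree} {i : ℕ},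
    (∀ j (hj : j < l.length), (termPositions l[j]).countP (fun p => P ((i + j) :: p)) = G l[j]) →
      (termPositionsList i l).countP P = (l.map G).sum
  | [], _, _ => by simp [termPositionsList]
  | t :: ts, i, h => by
    rw [termPositionsList, List.countP_append, List.countP_map, List.map_cons, List.sum_cons,
      countP_termPositionsList (G := G) fun j hj => by
        rw [Nat.add_right_comm, Nat.add_assoc, ← List.getElem_cons_succ t]
        exact h (j + 1) (by simpa using hj)]
    exact congrArg (· + _) (h 0 (by simp))

/-- Contains every child on either side of a one-leaf change at the root; `leaf` is included so
that the contribution of the root can always be split off. -/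
def childSupport (cs ds : List PreTree) : Finset PreTree := insert leaf (cs ++ ds).toFinset

theorem mem_childSupport {cs ds : List PreTree} {x : PreTree} (h : x ∈ cs ∨ x ∈ ds) :
    x ∈ childSupport cs ds := by
  simpa [childSupport] using .inr h

theorem leaf_mem_childSupport {cs ds : List PreTree} : leaf ∈ childSupport cs ds :=
  Finset.mem_insert_self _ _

theorem canon_node_set_eq_iff {cs ds : List PreTree} (hcs : ∀ c ∈ cs, IsCanon c)
    (hds : IsCanon (.node ds)) {j : ℕ} (hj : j < cs.length) (x : PreTree) :
    canon (.node (cs.set j x)) = .node ds ↔ (cs : Multiset PreTree) + {canon x} = ds + {cs[j]} := by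
  rw [canon_node_eq_iff hds, List.map_set, map_canon_eq_self hcs,
    ← List.coe_set_add_singleton cs hj, add_left_inj]

theorem canon_node_eraseIdx_eq_iff {cs ds : List PreTree} (hcs : IsCanon (.node cs))
    (hds : ∀ d ∈ ds, IsCanon d) {j : ℕ} (hj : j < ds.length) (hleaf : ds[j] = leaf) :
    canon (.node (ds.eraseIdx j)) = .node cs ↔ (cs : Multiset PreTree) + {leaf} = ds := by
  rw [canon_node_eq_iff hcs, map_canon_eq_self fun d hd => hds d (List.mem_of_mem_eraseIdx hd),
    ← hleaf, ← List.coe_eraseIdx_add_singleton ds hj, add_left_inj, eq_comm]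

theorem canon_node_append_leaf_eq_iff {cs ds : List PreTree} (hcs : ∀ c ∈ cs, IsCanon c)
    (hds : IsCanon (.node ds)) :
    canon (.node (cs ++ [leaf])) = .node ds ↔ (cs : Multiset PreTree) + {leaf} = ds := by
  rw [canon_node_eq_iff hds, List.map_append, map_canon_eq_self hcs, List.map_singleton,
    isCanon_leaf, ← Multiset.coe_add]
  rfl

theorem countP_addLeafAt_child {cs ds : List PreTree} (hcs : ∀ c ∈ cs, IsCanon c)
    (hds : IsCanon (.node ds)) {j : ℕ} (hj : j < cs.length) :
    (positions cs[j]).countP (fun p => canon (addLeafAt (.node cs) (j :: p)) = .node ds) =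
      ∑ d ∈ childSupport cs ds,
        if (cs : Multiset PreTree) + {d} = ds + {cs[j]} then ncoef cs[j] d else 0 := by
  simp only [addLeafAt, addLeafAtList_eq_set hj, canon_node_set_eq_iff hcs hds hj]
  rw [List.countP_eq_sum_ite _ (fun p => canon (addLeafAt cs[j] p))
    (fun x => (cs : Multiset PreTree) + {x} = ds + {cs[j]})
    fun p _ h => mem_childSupport (cs := cs) (ds := ds) ?_]
  · simp only [ncoef, List.countP_eq_length_filter]
  · rcases Multiset.mem_or_eq_of_add_singleton_eq h with hx | hx
    · exact .inr hx
    · exact .inl (by rw [hx]; exact List.getElem_mem hj)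

theorem countP_removeAt_child {cs ds : List PreTree} (hcs : IsCanon (.node cs))
    (hds : ∀ d ∈ ds, IsCanon d) {j : ℕ} (hj : j < ds.length) (hleaf : ds[j] ≠ leaf) :
    (termPositions ds[j]).countP (fun q => canon (removeAt (.node ds) (j :: q)) = .node cs) =
      ∑ c ∈ childSupport cs ds,
        if (ds : Multiset PreTree) + {c} = cs + {ds[j]} then mcoef c ds[j] else 0 := by
  have hcongr : (termPositions ds[j]).countP
      (fun q => canon (removeAt (.node ds) (j :: q)) = .node cs) = (termPositions ds[j]).countP
      (fun q => (ds : Multiset PreTree) + {canon (removeAt ds[j] q)} = cs + {ds[j]}) := by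
    refine List.countP_congr fun q hq => ?_
    obtain _ | ⟨a, p⟩ := q
    · exact absurd (eq_leaf_of_nil_mem_termPositions hq) hleaf
    · simp only [removeAt_cons_cons, removeAtList_eq_set hj, decide_eq_true_eq]
      exact canon_node_set_eq_iff hds hcs hj _
  rw [hcongr, List.countP_eq_sum_ite _ (fun q => canon (removeAt ds[j] q))
    (fun x => (ds : Multiset PreTree) + {x} = cs + {ds[j]})
    fun q _ h => mem_childSupport (cs := cs) (ds := ds) ?_]
  · simp only [mcoef, List.countP_eq_length_filter]
  · rcases Multiset.mem_or_eq_of_add_singleton_eq h with hx | hx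
    · exact .inl hx
    · exact .inr (by rw [hx]; exact List.getElem_mem hj)

/-- The new leaf is attached either to the root or inside a child `c`, which it turns into `d`. -/
theorem ncoef_node {cs ds : List PreTree} (hs : IsCanon (.node cs)) (ht : IsCanon (.node ds)) :
    ncoef (.node cs) (.node ds) =
      (if (cs : Multiset PreTree) + {leaf} = ds then 1 else 0) +
      ∑ c ∈ childSupport cs ds, (cs : Multiset PreTree).count c *
        ∑ d ∈ childSupport cs ds,
          if (cs : Multiset PreTree) + {d} = ds + {c} then ncoef c d else 0 := by
  have hcs : ∀ c ∈ cs, IsCanon c := fun c hc => hs.of_mem hc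
  rw [ncoef, ← List.countP_eq_length_filter, positions, List.countP_cons, add_comm,
    countP_positionsList (G := fun c => ∑ d ∈ childSupport cs ds,
      if (cs : Multiset PreTree) + {d} = ds + {c} then ncoef c d else 0)
      fun j hj => by simpa using countP_addLeafAt_child hcs ht hj,
    List.sum_map_eq_sum_count_smul _ _ fun c hc => mem_childSupport (ds := ds) (.inl hc)]
  simp only [addLeafAt, canon_node_append_leaf_eq_iff hcs ht, decide_eq_true_eq, smul_eq_mul]

/-- The removed leaf is either a child of the root or lies inside a child `d ≠ leaf`, which its
removal turns into `c`. -/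
theorem mcoef_node {cs ds : List PreTree} (hs : IsCanon (.node cs)) (ht : IsCanon (.node ds))
    (hds : ds ≠ []) :
    mcoef (.node cs) (.node ds) =
      (ds : Multiset PreTree).count leaf *
        (if (cs : Multiset PreTree) + {leaf} = ds then 1 else 0) +
      ∑ d ∈ (childSupport cs ds).erase leaf, (ds : Multiset PreTree).count d *
        ∑ c ∈ childSupport cs ds,
          if (ds : Multiset PreTree) + {c} = cs + {d} then mcoef c d else 0 := by
  have hds' : ∀ d ∈ ds, IsCanon d := fun d hd => ht.of_mem hd
  let G : PreTree → ℕ := fun d =>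
    if d = leaf then (if (cs : Multiset PreTree) + {leaf} = ds then 1 else 0)
    else ∑ c ∈ childSupport cs ds, if (ds : Multiset PreTree) + {c} = cs + {d} then mcoef c d else 0
  have hchild : ∀ j (hj : j < ds.length), (termPositions ds[j]).countP
      (fun q => canon (removeAt (.node ds) ((0 + j) :: q)) = .node cs) = G ds[j] := by
    intro j hj
    by_cases hleaf : ds[j] = leaf
    · have hterm : termPositions ds[j] = [[]] := by rw [hleaf]; rfl
      have hrem : removeAt (.node ds) [j] = .node (ds.eraseIdx j) := by rw [removeAt]
      rw [hterm]
      simp [G, hleaf, hrem, canon_node_eraseIdx_eq_iff hs hds' hj hleaf]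
    · simpa [G, hleaf] using countP_removeAt_child hs hds' hj hleaf
  obtain ⟨d, ds, rfl⟩ := List.exists_cons_of_ne_nil hds
  rw [mcoef, ← List.countP_eq_length_filter, termPositions, countP_termPositionsList hchild,
    List.sum_map_eq_sum_count_smul _ _ fun d hd => mem_childSupport (cs := cs) (.inr hd),
    ← Finset.add_sum_erase _ _ leaf_mem_childSupport]
  refine congrArg₂ (· + ·) (by simp [G]) (Finset.sum_congr rfl fun x hx => ?_)
  simp [G, Finset.ne_of_mem_erase hx]

def sgOrderOfChildren (M : Multiset PreTree) : ℕ :=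
  (M.map sgOrder).prod * ∏ c ∈ M.toFinset, (M.count c).factorial

theorem sgOrderList_eq_prod (l : List PreTree) : sgOrderList l = (l.map sgOrder).prod := by
  induction l with
  | nil => rfl
  | cons t ts ih => rw [sgOrderList, ih, List.map_cons, List.prod_cons]

theorem sgOrder_node {cs : List PreTree} (hcs : ∀ c ∈ cs, IsCanon c) :
    sgOrder (.node cs) = sgOrderOfChildren cs := by
  rw [sgOrder, sgOrderList_eq_prod, canonList_eq_map, map_canon_eq_self hcs, sgOrderOfChildren,
    Multiset.map_coe, Multiset.prod_coe, List.toFinset_coe,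
    ← List.prod_toFinset _ (List.nodup_dedup cs), show cs.dedup.toFinset = cs.toFinset by ext; simp]
  simp only [Multiset.coe_count]

theorem sgOrder_pos (t : PreTree) : 0 < sgOrder t := by
  induction t using PreTree.induction with
  | node cs ih =>
    rw [sgOrder, sgOrderList_eq_prod]
    refine Nat.mul_pos (List.prod_pos fun x hx => ?_) (List.prod_pos fun x hx => ?_)
    · obtain ⟨c, hc, rfl⟩ := List.mem_map.mp hx
      exact ih c hc
    · obtain ⟨c, -, rfl⟩ := List.mem_map.mp hx
      exact Nat.factorial_pos _

theorem sgOrderOfChildren_add_singleton (M : Multiset PreTree) (d : PreTree) :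
    sgOrderOfChildren (M + {d}) = sgOrderOfChildren M * sgOrder d * (M.count d + 1) := by
  rw [add_comm, Multiset.singleton_add, sgOrderOfChildren, sgOrderOfChildren,
    Multiset.prod_factorial_count_cons, Multiset.map_cons, Multiset.prod_cons]
  ring

/-- Exchanging a child `c` of the root for `d` multiplies `sgOrderOfChildren` by
`sgOrder d · N.count d / (sgOrder c · M.count c)`. -/
theorem count_mul_mcoef_mul_sgOrderOfChildren {M N : Multiset PreTree} {c d : PreTree}
    (h : N + {c} = M + {d})
    (hcd : c ∈ M → d ∈ N → mcoef c d * sgOrder c = ncoef c d * sgOrder d) :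
    N.count d * mcoef c d * sgOrderOfChildren M = M.count c * ncoef c d * sgOrderOfChildren N := by
  by_cases hc : c = d
  · subst hc
    obtain rfl : N = M := (add_left_inj _).mp h
    by_cases hmem : c ∈ N
    · rw [Nat.eq_of_mul_eq_mul_right (sgOrder_pos c) (hcd hmem hmem)]
    · simp [Multiset.count_eq_zero_of_notMem hmem]
  · have hmem : c ∈ M := (Multiset.mem_or_eq_of_add_singleton_eq h).resolve_right hc
    obtain ⟨P, rfl⟩ : ∃ P, M = P + {c} :=
      ⟨M.erase c, by rw [add_comm, Multiset.singleton_add, Multiset.cons_erase hmem]⟩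
    obtain rfl : N = P + {d} := by
      rw [add_right_comm] at h
      exact add_left_injective _ h
    have hkey := hcd (by simp) (by simp)
    simp only [sgOrderOfChildren_add_singleton, Multiset.count_add, Multiset.count_singleton_self]
    linear_combination (P.count d + 1) * (P.count c + 1) * sgOrderOfChildren P * hkey

theorem mcoef_mul_sgOrder {s t : PreTree} (hs : IsCanon s) (ht : IsCanon t) (htl : t ≠ leaf) :
    mcoef s t * sgOrder s = ncoef s t * sgOrder t := by
  induction t using PreTree.induction generalizing s with
  | node ds ih =>
  obtain ⟨cs⟩ := s
  have hds : ds ≠ [] := by rintro rfl; exact htl rfl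
  rw [mcoef_node hs ht hds, ncoef_node hs ht, sgOrder_node fun c hc => hs.of_mem hc,
    sgOrder_node fun d hd => ht.of_mem hd, add_mul, add_mul]
  refine congrArg₂ (· + ·) ?_ ?_
  · split_ifs with hroot
    · rw [← hroot, sgOrderOfChildren_add_singleton, Multiset.count_add,
        Multiset.count_singleton_self, show sgOrder leaf = 1 from rfl]
      ring
    · simp
  · have hinner : ∀ c, ∑ d ∈ childSupport cs ds,
        (if (cs : Multiset PreTree) + {d} = ds + {c} then ncoef c d else 0) =
        ∑ d ∈ (childSupport cs ds).erase leaf,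
          if (cs : Multiset PreTree) + {d} = ds + {c} then ncoef c d else 0 :=
      fun c => (Finset.sum_erase _ (by simp [ncoef_leaf_right])).symm
    simp only [hinner, Finset.sum_mul, Finset.mul_sum]
    conv_rhs => rw [Finset.sum_comm]
    refine Finset.sum_congr rfl fun d hd => Finset.sum_congr rfl fun c _ => ?_
    by_cases h : (ds : Multiset PreTree) + {c} = cs + {d}
    · rw [if_pos h, if_pos h.symm]
      exact (count_mul_mcoef_mul_sgOrderOfChildren h fun hc hd' =>
        ih d hd' (hs.of_mem hc) (ht.of_mem hd') (Finset.ne_of_mem_erase hd)).trans (by ring)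
    · simp [h, Ne.symm h]

theorem isCanon_and_size_of_mem_treeList : ∀ {n : ℕ} {t : PreTree},
    t ∈ treeList n → IsCanon t ∧ size t = n
  | 0, t, h => by simp [treeList] at h
  | 1, t, h => by
    rw [treeList, List.mem_singleton] at h
    exact h ▸ ⟨isCanon_leaf, rfl⟩
  | n + 2, t, h => by
    rw [treeList, List.mem_dedup, List.mem_flatMap] at h
    obtain ⟨s, hs, hmem⟩ := h
    obtain ⟨p, hp, rfl⟩ := List.mem_map.mp hmem
    refine ⟨isCanon_canon _, ?_⟩
    rw [size_canon, size_addLeafAt hp, (isCanon_and_size_of_mem_treeList hs).2]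

theorem ne_leaf_of_mem_treeList_succ {n : ℕ} {s t : PreTree} (hs : s ∈ treeList n)
    (ht : t ∈ treeList (n + 1)) : t ≠ leaf := by
  rintro rfl
  obtain rfl : n = 0 := by simpa [leaf, size_node] using (isCanon_and_size_of_mem_treeList ht).2
  simp [treeList] at hs

theorem mWt_eq_sum {t : PreTree} {n : ℕ} (h : size t = n + 2) :
    mWt t = ((treeList (n + 1)).map fun s => mcoef s t * mWt s).sum := by
  rw [mWt, h]
  change mGen (n + 1) leaf t = _
  rw [mGen, h]
  refine congrArg List.sum (List.map_congr_left fun s hs => ?_)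
  rw [mWt, (isCanon_and_size_of_mem_treeList hs).2]
  rfl

theorem nWt_eq_sum {t : PreTree} {n : ℕ} (h : size t = n + 2) :
    nWt t = ((treeList (n + 1)).map fun s => nWt s * ncoef s t).sum := by
  rw [nWt, h]
  change nGen (n + 1) leaf t = _
  rw [nGen, show size leaf + n = n + 1 from Nat.add_comm 1 n]
  refine congrArg List.sum (List.map_congr_left fun s hs => ?_)
  rw [nWt, (isCanon_and_size_of_mem_treeList hs).2]
  rfl

theorem mWt_eq_nWt_mul_sgOrder : ∀ {n : ℕ} {t : PreTree}, t ∈ treeList n →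
    mWt t = nWt t * sgOrder t
  | 0, t, h => by simp [treeList] at h
  | 1, t, h => by
    rw [treeList, List.mem_singleton] at h
    subst h
    rfl
  | n + 2, t, h => by
    obtain ⟨ht, hsize⟩ := isCanon_and_size_of_mem_treeList h
    rw [mWt_eq_sum hsize, nWt_eq_sum hsize, ← List.sum_map_mul_right]
    refine congrArg List.sum (List.map_congr_left fun s hs => ?_)
    rw [mWt_eq_nWt_mul_sgOrder hs]
    linear_combination nWt s * mcoef_mul_sgOrder (isCanon_and_size_of_mem_treeList hs).1 ht
      (ne_leaf_of_mem_treeList_succ hs h)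

theorem nWt_pos : ∀ {n : ℕ} {t : PreTree}, t ∈ treeList n → 0 < nWt t
  | 0, t, h => by simp [treeList] at h
  | 1, t, h => by
    rw [treeList, List.mem_singleton] at h
    subst h
    decide
  | n + 2, t, h => by
    rw [nWt_eq_sum (isCanon_and_size_of_mem_treeList h).2]
    rw [treeList, List.mem_dedup, List.mem_flatMap] at h
    obtain ⟨s, hs, hmem⟩ := h
    obtain ⟨p, hp, rfl⟩ := List.mem_map.mp hmem
    have hn : 0 < ncoef s (canon (addLeafAt s p)) :=
      List.length_pos_of_mem (List.mem_filter.mpr ⟨hp, decide_eq_true rfl⟩)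
    exact lt_of_lt_of_le (Nat.mul_pos (nWt_pos hs) hn)
      (List.le_sum_of_mem (List.mem_map_of_mem hs))

theorem mcoef_mul_mWt_mul_nWt {n : ℕ} {s t : PreTree} (hs : s ∈ treeList n)
    (ht : t ∈ treeList (n + 1)) : mcoef s t * mWt s * nWt t = ncoef s t * nWt s * mWt t := by
  rw [mWt_eq_nWt_mul_sgOrder hs, mWt_eq_nWt_mul_sgOrder ht]
  linear_combination nWt s * nWt t * mcoef_mul_sgOrder (isCanon_and_size_of_mem_treeList hs).1
    (isCanon_and_size_of_mem_treeList ht).1 (ne_leaf_of_mem_treeList_succ hs ht)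

end PreTree

open PreTree in
/-- `K_n = (1/C(n,2)) · A G P A⁻¹` where `A` is the diagonal
operator `t ↦ m(t)·t`; entrywise, for all `t, t' ∈ 𝒯_n`,
`K(t,t') = (m(t')/(C(n,2) m(t))) · Σ_{s : s ↗ t, s ↗ t'} m(s,t) n(s,t')`. -/
theorem K_eq_AGPAinv (n : ℕ) (hn : 2 ≤ n) (t t' : PreTree)
    (ht : t ∈ trees n) (ht' : t' ∈ trees n) :
    K n t t' = (mWt t' : ℚ) / ((Nat.choose n 2 : ℚ) * (mWt t : ℚ))
      * ∑ s ∈ trees (n - 1), ((mcoef s t * ncoef s t' : ℕ) : ℚ) := by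
  rw [K, Finset.mul_sum]
  refine Finset.sum_congr rfl fun s hs => ?_
  have hsL : s ∈ treeList (n - 1) := List.mem_toFinset.mp hs
  have ht'L : t' ∈ treeList (n - 1 + 1) := by
    rw [Nat.sub_add_cancel (by omega)]
    exact List.mem_toFinset.mp ht'
  have hns : (nWt s : ℚ) ≠ 0 := by exact_mod_cast (nWt_pos hsL).ne'
  have hweights : (mcoef s t' * mWt s * nWt t' : ℚ) = ncoef s t' * nWt s * mWt t' := by
    exact_mod_cast mcoef_mul_mWt_mul_nWt hsL ht'L
  calc Pd t s * Pu n s t'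
      = mcoef s t / (n.choose 2 * mWt t) * ((mcoef s t' * mWt s * nWt t') / nWt s) := by
        rw [Pd, Pu]; ring
    _ = _ := by rw [hweights, mul_right_comm, mul_div_cancel_right₀ _ hns]; push_cast; ring

end RootedTreeChain
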